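/- Let X1, X2, Y1, Y2 be finite sets and P_{Y1,Y2|X1,X2} a channel. Assume: (i) for every distribution P on X1, I(P, P_{Y2|X1,X2}(·|·,x2)) does not depend on x2 ∈ X2; (ii) for every distribution Q on X2, I(Q, P_{Y1|X1,X2}(·|x1,·)) does not depend on x1 ∈ X1. Then there exist distributions P* on X1 and Q* on X2 such that for every joint input distribution P^{(1)} on X1 × X2, the product distribution P^{(2)} = P* ⊗ Q* satisfies I^{(1)}(X1; Y2 | X2) ≤ I^{(2)}(X1; Y2 | X2) and I^{(1)}(X2; Y1 | X1) ≤ I^{(2)}(X2; Y1 | X1). -/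

import Mathlib

/-- A probability distribution on a finite set: nonnegative and sums to 1. -/
def IsProb {S : Type*} [Fintype S] (p : S → ℝ) : Prop :=
  (∀ s, 0 ≤ p s) ∧ ∑ s, p s = 1

/-- Input–output mutual information `I(P_X, P_{Y|X})` of a channel `W` under input `P`. -/
noncomputable def mutInf {X Y : Type*} [Fintype X] [Fintype Y]
    (P : X → ℝ) (W : X → Y → ℝ) : ℝ :=
  ∑ x, ∑ y, P x * W x y * Real.log (W x y / ∑ x', P x' * W x' y)

/-- Conditional distribution of the first coordinate given the second, for a joint
distribution `P` on `X1 × X2`; defined (arbitrarily) to be uniform when the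
conditioning event has zero probability. -/
noncomputable def condDist {X1 X2 : Type*} [Fintype X1] [Fintype X2]
    (P : X1 × X2 → ℝ) (x2 : X2) (x1 : X1) : ℝ :=
  if (∑ a, P (a, x2)) = 0 then (Fintype.card X1 : ℝ)⁻¹
  else P (x1, x2) / ∑ a, P (a, x2)

/-- Conditional mutual information `I(X1; Y | X2)` of the channel
`W : X1 → X2 → Y → ℝ` under joint input distribution `P` on `X1 × X2`:
`∑_{x2} P_{X2}(x2) · I(P_{X1|X2=x2}, W(·|·,x2))`. -/
noncomputable def condMI {X1 X2 Y : Type*} [Fintype X1] [Fintype X2] [Fintype Y]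
    (P : X1 × X2 → ℝ) (W : X1 → X2 → Y → ℝ) : ℝ :=
  ∑ x2, (∑ a, P (a, x2)) * mutInf (condDist P x2) (fun x1 y => W x1 x2 y)


/-! By compactness of the simplex, the channel `x1 ↦ W(·|x1, x2₀)` has a capacity-achieving
input `P*`, and by invariance `P*` achieves the same capacity `C` for every state `x2`. Each term
`I(P_{X1|X2=x2}, W(·|·,x2))` of a conditional mutual information is therefore at most `C`, while
for `P* ⊗ Q` every term equals `C`, whatever `Q` is. The second inequality is the same argument
with the roles of the two users exchanged, so `P*` and `Q*` can be chosen independently. -/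

open Finset Real

namespace IsProb

variable {S T : Type*} [Fintype S] [Fintype T]

lemma uniform [Nonempty S] : IsProb (fun _ : S => (Fintype.card S : ℝ)⁻¹) :=
  ⟨fun _ => by positivity, by simp⟩

lemma sum_sum_prod {P : S × T → ℝ} (hP : IsProb P) : ∑ t, ∑ s, P (s, t) = 1 := by
  rw [← hP.2, Fintype.sum_prod_type_right]

lemma comp_swap {P : S × T → ℝ} (hP : IsProb P) : IsProb (fun p : T × S => P (p.2, p.1)) :=
  ⟨fun _ => hP.1 _, hP.2 ▸ (Equiv.prodComm T S).sum_comp P⟩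

end IsProb

section MutInf

variable {X Y : Type*} [Fintype X] [Fintype Y]

lemma mutInf_eq_sub (P : X → ℝ) (W : X → Y → ℝ) (hP : ∀ x, 0 ≤ P x)
    (hW : ∀ x y, 0 ≤ W x y) :
    mutInf P W = ∑ x, ∑ y, P x * W x y * log (W x y) -
      ∑ y, (∑ x, P x * W x y) * log (∑ x, P x * W x y) := by
  have hsplit : ∀ x y, P x * W x y * log (W x y / ∑ x', P x' * W x' y) =
      P x * W x y * log (W x y) - P x * W x y * log (∑ x', P x' * W x' y) := by
    intro x y
    rcases (mul_nonneg (hP x) (hW x y)).eq_or_lt with hzero | hpos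
    · simp [← hzero]
    have hWxy : 0 < W x y := pos_of_mul_pos_right hpos (hP x)
    have hout : 0 < ∑ x', P x' * W x' y :=
      hpos.trans_le (single_le_sum (fun x' _ => mul_nonneg (hP x') (hW x' y)) (mem_univ x))
    rw [log_div hWxy.ne' hout.ne']
    ring
  simp only [mutInf, hsplit, sum_sub_distrib, sum_mul]
  rw [sum_comm (f := fun x y => P x * W x y * log (∑ x', P x' * W x' y))]

lemma continuousOn_mutInf (W : X → Y → ℝ) (hW : ∀ x y, 0 ≤ W x y) :
    ContinuousOn (fun P => mutInf P W) (stdSimplex ℝ X) := by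
  refine ContinuousOn.congr (f := fun P => ∑ x, ∑ y, P x * W x y * log (W x y) -
      ∑ y, (∑ x, P x * W x y) * log (∑ x, P x * W x y)) ?_
    fun P hP => mutInf_eq_sub P W hP.1 hW
  refine Continuous.continuousOn (.sub (by fun_prop) ?_)
  exact continuous_finsetSum _ fun y _ => continuous_mul_log.comp (by fun_prop)

lemma exists_isProb_forall_mutInf_le [Nonempty X] (W : X → Y → ℝ) (hW : ∀ x y, 0 ≤ W x y) :
    ∃ P, IsProb P ∧ ∀ Q, IsProb Q → mutInf Q W ≤ mutInf P W :=
  (isCompact_stdSimplex ℝ X).exists_isMaxOn ⟨_, IsProb.uniform⟩ (continuousOn_mutInf W hW)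

end MutInf

section CondMI

variable {X1 X2 Y : Type*} [Fintype X1] [Fintype X2] [Fintype Y]

lemma isProb_condDist [Nonempty X1] {P : X1 × X2 → ℝ} (hP : ∀ p, 0 ≤ P p) (x2 : X2) :
    IsProb (condDist P x2) := by
  unfold condDist
  split_ifs with h
  · exact IsProb.uniform
  · have hpos : 0 < ∑ a, P (a, x2) := (sum_nonneg fun a _ => hP _).lt_of_ne' h
    exact ⟨fun _ => div_nonneg (hP _) hpos.le, by rw [← sum_div, div_self h]⟩

lemma condDist_prod {P : X1 → ℝ} {Q : X2 → ℝ} (hP : ∑ x1, P x1 = 1) {x2 : X2}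
    (hQ : Q x2 ≠ 0) : condDist (fun p => P p.1 * Q p.2) x2 = P := by
  funext x1
  simp only [condDist, ← sum_mul, hP, one_mul, if_neg hQ, mul_div_cancel_right₀ _ hQ]

lemma condMI_prod {P : X1 → ℝ} {Q : X2 → ℝ} (hP : ∑ x1, P x1 = 1) (V : X1 → X2 → Y → ℝ) :
    condMI (fun p => P p.1 * Q p.2) V = ∑ x2, Q x2 * mutInf P (fun x1 y => V x1 x2 y) := by
  refine sum_congr rfl fun x2 _ => ?_
  simp only [← sum_mul, hP, one_mul]
  rcases eq_or_ne (Q x2) 0 with hQ | hQ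
  · simp [hQ]
  · rw [condDist_prod hP hQ]

lemma condMI_le [Nonempty X1] {P1 : X1 × X2 → ℝ} (hP1 : IsProb P1) {V : X1 → X2 → Y → ℝ}
    {M : ℝ} (hM : ∀ x2 P, IsProb P → mutInf P (fun x1 y => V x1 x2 y) ≤ M) :
    condMI P1 V ≤ M :=
  calc condMI P1 V ≤ ∑ x2, (∑ a, P1 (a, x2)) * M :=
        sum_le_sum fun x2 _ => mul_le_mul_of_nonneg_left (hM x2 _ (isProb_condDist hP1.1 x2))
          (sum_nonneg fun a _ => hP1.1 _)
    _ = M := by rw [← sum_mul, hP1.sum_sum_prod, one_mul]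

theorem exists_condMI_le_condMI_prod [Nonempty X1] [Nonempty X2] (V : X1 → X2 → Y → ℝ)
    (hV : ∀ x1 x2 y, 0 ≤ V x1 x2 y)
    (hinv : ∀ P, IsProb P → ∀ x2 x2',
      mutInf P (fun x1 y => V x1 x2 y) = mutInf P (fun x1 y => V x1 x2' y)) :
    ∃ Pstar, IsProb Pstar ∧ ∀ Q, IsProb Q → ∀ P1, IsProb P1 →
      condMI P1 V ≤ condMI (fun p => Pstar p.1 * Q p.2) V := by
  obtain ⟨x2₀⟩ := ‹Nonempty X2›
  obtain ⟨Pstar, hPstar, hmax⟩ := exists_isProb_forall_mutInf_le _ fun x1 y => hV x1 x2₀ y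
  refine ⟨Pstar, hPstar, fun Q hQ P1 hP1 => ?_⟩
  have hprod : condMI (fun p => Pstar p.1 * Q p.2) V = mutInf Pstar fun x1 y => V x1 x2₀ y := by
    simp only [condMI_prod hPstar.2, hinv Pstar hPstar _ x2₀, ← sum_mul, hQ.2, one_mul]
  rw [hprod]
  exact condMI_le hP1 fun x2 P hP => hinv P hP x2 x2₀ ▸ hmax P hP

end CondMI

/-- if in both directions the input-output mutual information of the
state-dependent one-way channels does not depend on the state, then there exist
distributions `P*` on `X1` and `Q*` on `X2` such that the product `P* ⊗ Q*`
dominates both conditional mutual informations for every joint input distribution. -/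
theorem product_dominance_of_two_sided_invariance
    {X1 X2 Y1 Y2 : Type*} [Fintype X1] [Fintype X2] [Fintype Y1] [Fintype Y2]
    [Nonempty X1] [Nonempty X2]
    (W : X1 → X2 → Y1 × Y2 → ℝ) (hW : ∀ x1 x2, IsProb (W x1 x2))
    (hinv1 : ∀ (P : X1 → ℝ), IsProb P → ∀ x2 x2' : X2,
      mutInf P (fun x1 y2 => ∑ y1, W x1 x2 (y1, y2)) =
        mutInf P (fun x1 y2 => ∑ y1, W x1 x2' (y1, y2)))
    (hinv2 : ∀ (Q : X2 → ℝ), IsProb Q → ∀ x1 x1' : X1,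
      mutInf Q (fun x2 y1 => ∑ y2, W x1 x2 (y1, y2)) =
        mutInf Q (fun x2 y1 => ∑ y2, W x1' x2 (y1, y2))) :
    ∃ (Pstar : X1 → ℝ) (Qstar : X2 → ℝ), IsProb Pstar ∧ IsProb Qstar ∧
      ∀ (P1 : X1 × X2 → ℝ), IsProb P1 →
        condMI P1 (fun x1 x2 y2 => ∑ y1, W x1 x2 (y1, y2)) ≤
          condMI (fun p => Pstar p.1 * Qstar p.2)
            (fun x1 x2 y2 => ∑ y1, W x1 x2 (y1, y2)) ∧
        condMI (fun p : X2 × X1 => P1 (p.2, p.1))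
            (fun x2 x1 y1 => ∑ y2, W x1 x2 (y1, y2)) ≤
          condMI (fun p : X2 × X1 => Pstar p.2 * Qstar p.1)
            (fun x2 x1 y1 => ∑ y2, W x1 x2 (y1, y2)) := by
  obtain ⟨Pstar, hPstar, hdom1⟩ := exists_condMI_le_condMI_prod _
    (fun x1 x2 y2 => sum_nonneg fun y1 _ => (hW x1 x2).1 _) hinv1
  obtain ⟨Qstar, hQstar, hdom2⟩ := exists_condMI_le_condMI_prod _
    (fun x2 x1 y1 => sum_nonneg fun y2 _ => (hW x1 x2).1 _) hinv2
  refine ⟨Pstar, Qstar, hPstar, hQstar, fun P1 hP1 => ⟨hdom1 Qstar hQstar P1 hP1, ?_⟩⟩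
  simpa only [mul_comm (Qstar _)] using hdom2 Pstar hPstar _ hP1.comp_swap
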